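/- Let G be an abelian group, let T be the torsion subgroup of G, and suppose G is the internal direct sum of a subgroup V and T (so V is torsion-free). If the subgroup 2G = {2g : g ∈ G} is divisible, then V is divisible; consequently V, being torsion-free and divisible, is uniquely divisible (i.e., for every v ∈ V and every positive integer n there is a unique w ∈ V with n · w = v). -/
import Mathlib


/-- Let `G` be an abelian group which is the internal direct sum of a subgroup `V` and its
torsion subgroup. If the subgroup `2G` is divisible, then `V` is divisible; consequently,
being torsion-free and divisible, `V` is uniquely divisible. -/
theorem stmt_11 {G : Type*} [AddCommGroup G] (V : AddSubgroup G)
    (hcompl : IsCompl V (AddCommGroup.torsion G))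
    (hdiv : ∀ g : G, ∀ n : ℕ, 0 < n → ∃ g' : G, n • (2 • g') = 2 • g) :
    (∀ v ∈ V, ∀ n : ℕ, 0 < n → ∃ w ∈ V, n • w = v) ∧
    (∀ v ∈ V, ∀ n : ℕ, 0 < n → ∃! w, w ∈ V ∧ n • w = v) := by
  have hinf : ∀ x : G, x ∈ V → x ∈ AddCommGroup.torsion G → x = 0 := by
    intro x hx ht
    have hmem : x ∈ V ⊓ AddCommGroup.torsion G := ⟨hx, ht⟩
    rw [hcompl.inf_eq_bot] at hmem
    exact hmem
  have hdivV : ∀ v ∈ V, ∀ n : ℕ, 0 < n → ∃ w ∈ V, n • w = v := by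
    intro v hv n hn
    obtain ⟨g', hg'⟩ := hdiv v n hn
    have hmem : g' ∈ V ⊔ AddCommGroup.torsion G := by
      rw [hcompl.sup_eq_top]; trivial
    obtain ⟨w, hw, t, ht, rfl⟩ := (AddSubgroup.mem_sup).1 hmem
    refine ⟨w, hw, ?_⟩
    have key : (2 * n) • w + (2 * n) • t = 2 • v := by
      rw [← smul_add]
      calc (2 * n) • (w + t) = n • (2 • (w + t)) := by rw [smul_smul, mul_comm]
        _ = 2 • v := hg'
    have htors : (2 * n) • t ∈ AddCommGroup.torsion G :=
      AddSubgroup.nsmul_mem _ ht _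
    have hVmem : (2 * n) • w - 2 • v ∈ V := by
      exact AddSubgroup.sub_mem V (AddSubgroup.nsmul_mem V hw _) (AddSubgroup.nsmul_mem V hv _)
    have hTmem : (2 * n) • w - 2 • v ∈ AddCommGroup.torsion G := by
      have : (2 * n) • w - 2 • v = -((2 * n) • t) := by
        rw [← key]; abel
      rw [this]
      exact AddSubgroup.neg_mem _ htors
    have h2 : (2 * n) • w = 2 • v := sub_eq_zero.mp (hinf _ hVmem hTmem)
    have h3 : (2 : ℕ) • (n • w - v) = 0 := by
      rw [smul_sub, smul_smul, h2, sub_self]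
    have h4 : n • w - v ∈ AddCommGroup.torsion G :=
      isOfFinAddOrder_iff_nsmul_eq_zero.mpr ⟨2, by norm_num, h3⟩
    have h5 : n • w - v ∈ V :=
      AddSubgroup.sub_mem V (AddSubgroup.nsmul_mem V hw _) hv
    have := hinf _ h5 h4
    exact sub_eq_zero.mp this
  refine ⟨hdivV, ?_⟩
  intro v hv n hn
  obtain ⟨w, hw, hwn⟩ := hdivV v hv n hn
  refine ⟨w, ⟨hw, hwn⟩, ?_⟩
  rintro y ⟨hy, hyn⟩
  have hmem : y - w ∈ V := AddSubgroup.sub_mem V hy hw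
  have htor : y - w ∈ AddCommGroup.torsion G := by
    refine isOfFinAddOrder_iff_nsmul_eq_zero.mpr ⟨n, hn, ?_⟩
    rw [smul_sub, hwn, hyn, sub_self]
  have := hinf _ hmem htor
  exact sub_eq_zero.mp this
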